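/- Let g be the Lie algebra s_{6,154}^0 with structure equations (-e^{26} - e^{35}, e^{16} - e^{34}, -e^{45}, e^{56}, -e^{46}, 0). Then the endomorphism J given by J e1 = -e2, J e2 = e1, J e3 = e6, J e6 = -e3, J e4 = e5, J e5 = -e4 satisfies J² = -Id and N_J ≡ 0, and its Koszul 1-form equals ψ = -4 e^6 (in particular ψ vanishes on [g,g] = span{e1,…,e5}) but ψ ≠ 0. -/
import Mathlib


namespace Stmt10

abbrev V : Type := Fin 6 → ℝ

/-- standard basis -/
noncomputable def e (i : Fin 6) : V := Pi.single i 1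

/-- the Lie bracket -/
def br (x y : V) : V := fun k =>
  match k with
  | 0 => (x 1 * y 5 - x 5 * y 1) + (x 2 * y 4 - x 4 * y 2)
  | 1 => -(x 0 * y 5 - x 5 * y 0) + (x 2 * y 3 - x 3 * y 2)
  | 2 => x 3 * y 4 - x 4 * y 3
  | 3 => -(x 4 * y 5 - x 5 * y 4)
  | 4 => x 3 * y 5 - x 5 * y 3
  | 5 => 0

/-- the adjoint operator `ad x = [x, ·]` as a linear endomorphism -/
noncomputable def ad (x : V) : V →ₗ[ℝ] V where
  toFun := br x
  map_add' := by intro a b; funext k; fin_cases k <;> simp [br] <;> ring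
  map_smul' := by intro c a; funext k; fin_cases k <;> simp [br] <;> ring

/-- the Nijenhuis tensor of an endomorphism `J` -/
noncomputable def nijenhuis (J : V →ₗ[ℝ] V) (x y : V) : V :=
  br x y + J (br (J x) y + br x (J y)) - br (J x) (J y)

/-- the Koszul 1-form `ψ(x) = Tr(J ∘ ad x) - Tr(ad (J x))` -/
noncomputable def psi (J : V →ₗ[ℝ] V) (x : V) : ℝ :=
  LinearMap.trace ℝ V (J ∘ₗ ad x) - LinearMap.trace ℝ V (ad (J x))

noncomputable def Jmap : V →ₗ[ℝ] V where
  toFun x := fun k =>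
    match k with
    | 0 => x 1
    | 1 => -x 0
    | 2 => -x 5
    | 3 => -x 4
    | 4 => x 3
    | 5 => x 2
  map_add' := by intro a b; funext k; fin_cases k <;> simp <;> ring
  map_smul' := by intro c a; funext k; fin_cases k <;> simp <;> ring

lemma trace_eq (f : V →ₗ[ℝ] V) :
    LinearMap.trace ℝ V f = ∑ i : Fin 6, f (e i) i := by
  rw [LinearMap.trace_eq_matrix_trace ℝ (Pi.basisFun ℝ (Fin 6)) f, Matrix.trace]
  simp [Matrix.diag, LinearMap.toMatrix_apply, e]

/-- on `s_{6,154}^0` the given `J` is an integrable complex structure whose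
Koszul form is `ψ = ±4 e^6`: it vanishes on `e1,…,e5` (hence on `[g,g]`) but not on `e6`. -/
theorem stmt_10 :
    ∃ J : V →ₗ[ℝ] V,
      J (e 0) = -e 1 ∧ J (e 1) = e 0 ∧ J (e 2) = e 5 ∧ J (e 5) = -e 2 ∧
      J (e 3) = e 4 ∧ J (e 4) = -e 3 ∧
      (∀ x : V, J (J x) = -x) ∧
      (∀ x y : V, nijenhuis J x y = 0) ∧
      psi J (e 0) = 0 ∧ psi J (e 1) = 0 ∧ psi J (e 2) = 0 ∧
      psi J (e 3) = 0 ∧ psi J (e 4) = 0 ∧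
      (psi J (e 5) = 4 ∨ psi J (e 5) = -4) ∧ psi J (e 5) ≠ 0 := by
  refine ⟨Jmap, ?_, ?_, ?_, ?_, ?_, ?_, ?_, ?_, ?_, ?_, ?_, ?_, ?_, ?_, ?_⟩
  · funext k; fin_cases k <;> simp [Jmap, e, Pi.single_apply]
  · funext k; fin_cases k <;> simp [Jmap, e, Pi.single_apply]
  · funext k; fin_cases k <;> simp [Jmap, e, Pi.single_apply]
  · funext k; fin_cases k <;> simp [Jmap, e, Pi.single_apply]
  · funext k; fin_cases k <;> simp [Jmap, e, Pi.single_apply]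
  · funext k; fin_cases k <;> simp [Jmap, e, Pi.single_apply]
  · intro x; funext k; fin_cases k <;> simp [Jmap]
  · intro x y; funext k; fin_cases k <;>
      simp [nijenhuis, Jmap, br, ad] <;> ring
  · simp [psi, trace_eq, Jmap, ad, br, e, Pi.single_apply, Fin.sum_univ_six]
  · simp [psi, trace_eq, Jmap, ad, br, e, Pi.single_apply, Fin.sum_univ_six]
  · simp [psi, trace_eq, Jmap, ad, br, e, Pi.single_apply, Fin.sum_univ_six]
  · simp [psi, trace_eq, Jmap, ad, br, e, Pi.single_apply, Fin.sum_univ_six]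
  · simp [psi, trace_eq, Jmap, ad, br, e, Pi.single_apply, Fin.sum_univ_six]
  · left
    simp [psi, trace_eq, Jmap, ad, br, e, Pi.single_apply, Fin.sum_univ_six]
    norm_num
  · have h : psi Jmap (e 5) = 4 := by
      simp [psi, trace_eq, Jmap, ad, br, e, Pi.single_apply, Fin.sum_univ_six]
      norm_num
    rw [h]; norm_num

end Stmt10
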